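/- arXiv:0804.2795 — 2 statements merged into one kernel-verified Lean document; each statement's English description precedes it below -/
import Mathlib

section
/- Let φ be the traveling-wave profile. Then for all η ∈ [0,1/2]: (4√2/3)·η·(1/2 − η)^{3/2} ≤ φ(η) ≤ (4√6/3)·η·(1/2 − η)^{3/2}. -/
/-- The traveling-wave profile problem (0.2) with d = 1/2. -/
def IsTWProfile (φ : ℝ → ℝ) : Prop :=
  ContDiffOn ℝ 1 φ (Set.Icc 0 (1/2)) ∧
  ContDiffOn ℝ 3 φ (Set.Ioo 0 (1/2)) ∧
  (∀ η ∈ Set.Ioo (0:ℝ) (1/2), 0 < φ η) ∧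
  φ 0 = 0 ∧ φ (1/2) = 0 ∧
  derivWithin φ (Set.Icc 0 (1/2)) 0 = 1 ∧
  (∀ η ∈ Set.Ioo (0:ℝ) (1/2), φ η * deriv (deriv (deriv φ)) η = 1)

/-!
Integrating `φ φ''' = 1` once gives `φ φ'' - φ'²/2 - η = C`. Since `φ(η) ≈ η` and `φ' → 1` at
`0`, any `C ≠ -1/2` would make `φ''` of size `1/η` there, and `φ'` would diverge
logarithmically; so `C = -1/2`, and then `w = √φ` solves `w'' = -(1/2 - η) / (2 w³)`, whose
right-hand side is increasing in `w`.

The barriers `W = √(k η (1/2 - η)^{3/2})` satisfy `W'' = -(1/2 - η) / (2 W³) · k² Q / 8` with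
`Q = 1 + 2η - 5η² ∈ [3/4, 6/5]`. For `k² ≥ 32/3` this gives `W'' < w''` wherever `w > W`, and for
`k² ≤ 20/3` it gives `w'' < W''` wherever `w < W`. Since `w = W = 0` at both ends, a maximum
principle (a function with positive second derivative wherever it is positive has no positive
interior maximum) yields `w ≤ W` in the first case and `W ≤ w` in the second.
-/

open Set Filter Topology

lemma nonpos_of_hasDerivAt2_pos_of_pos {g g' g'' : ℝ → ℝ} {a b : ℝ}
    (hg : ContinuousOn g (Icc a b)) (ha : g a ≤ 0) (hb : g b ≤ 0)
    (hg' : ∀ x ∈ Ioo a b, HasDerivAt g (g' x) x) (hg'' : ∀ x ∈ Ioo a b, HasDerivAt g' (g'' x) x)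
    (hpos : ∀ x ∈ Ioo a b, 0 < g x → 0 < g'' x) :
    ∀ x ∈ Icc a b, g x ≤ 0 := by
  intro x hx
  by_contra! hgx
  obtain ⟨z, hz, hmax⟩ := isCompact_Icc.exists_isMaxOn ⟨x, hx⟩ hg
  have hgz : 0 < g z := hgx.trans_le (hmax hx)
  have hzI : z ∈ Ioo a b :=
    ⟨hz.1.lt_of_ne (by rintro rfl; linarith), hz.2.lt_of_ne (by rintro rfl; linarith)⟩
  have hzI' : ∀ᶠ y in 𝓝 z, y ∈ Ioo a b := isOpen_Ioo.mem_nhds hzI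
  have hnear : ∀ᶠ y in 𝓝 z, y ∈ Ioo a b ∧ 0 < g y :=
    hzI'.and ((hg.continuousAt (Icc_mem_nhds hzI.1 hzI.2)).eventually (lt_mem_nhds hgz))
  obtain ⟨δ, hδ, hball⟩ := Metric.nhds_basis_closedBall.eventually_iff.1 hnear
  have hderiv2 : ∀ y ∈ Metric.ball z δ, deriv^[2] g y = g'' y := by
    intro y hy
    have hyI := (hball (Metric.ball_subset_closedBall hy)).1
    have hderiv : deriv g =ᶠ[𝓝 y] g' :=
      eventually_of_mem (isOpen_Ioo.mem_nhds hyI) fun t ht => (hg' t ht).deriv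
    simpa using hderiv.deriv_eq.trans (hg'' y hyI).deriv
  have hconv : StrictConvexOn ℝ (Metric.closedBall z δ) g := by
    refine strictConvexOn_of_deriv2_pos (convex_closedBall z δ)
      (hg.mono fun y hy => Ioo_subset_Icc_self (hball hy).1) fun y hy => ?_
    rw [interior_closedBall z hδ.ne'] at hy
    obtain ⟨hyI, hgy⟩ := hball (Metric.ball_subset_closedBall hy)
    exact hderiv2 y hy ▸ hpos y hyI hgy
  have hleft : z - δ ∈ Metric.closedBall z δ := by simp [abs_of_pos hδ]
  have hright : z + δ ∈ Metric.closedBall z δ := by simp [abs_of_pos hδ]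
  have hmid := hconv.2 hleft hright (by linarith) (by norm_num : (0:ℝ) < 1/2)
    (by norm_num : (0:ℝ) < 1/2) (by norm_num)
  have hzmid : (1/2 : ℝ) • (z - δ) + (1/2 : ℝ) • (z + δ) = z := by simp only [smul_eq_mul]; ring
  rw [hzmid, smul_eq_mul, smul_eq_mul] at hmid
  have hgleft : g (z - δ) ≤ g z := hmax (Ioo_subset_Icc_self (hball hleft).1)
  have hgright : g (z + δ) ≤ g z := hmax (Ioo_subset_Icc_self (hball hright).1)
  linarith

lemma not_tendsto_nhds_of_div_le_deriv {u u' : ℝ → ℝ} {K : ℝ} (hK : 0 < K)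
    (hu : ∀ᶠ x in 𝓝[>] 0, HasDerivAt u (u' x) x ∧ K / x ≤ u' x) (l : ℝ) :
    ¬ Tendsto u (𝓝[>] 0) (𝓝 l) := by
  obtain ⟨δ, hδ : 0 < δ, hsub⟩ := mem_nhdsGT_iff_exists_Ioo_subset.1 hu
  have hmono : MonotoneOn (fun x => u x - K * Real.log x) (Ioo 0 δ) := by
    have hderiv : ∀ x ∈ Ioo 0 δ, HasDerivAt (fun x => u x - K * Real.log x) (u' x - K / x) x :=
      fun x hx => by
        simpa [div_eq_mul_inv] using
          (hsub hx).1.fun_sub ((Real.hasDerivAt_log hx.1.ne').const_mul K)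
    refine monotoneOn_of_hasDerivWithinAt_nonneg (f' := fun x => u' x - K / x) (convex_Ioo 0 δ)
      (fun x hx => (hderiv x hx).continuousAt.continuousWithinAt) (fun x hx => ?_) fun x hx => ?_
    · rw [interior_Ioo] at hx
      exact (hderiv x hx).hasDerivWithinAt
    · rw [interior_Ioo] at hx
      exact sub_nonneg.2 (hsub hx).2
  obtain ⟨b, hb⟩ := nonempty_Ioo.2 hδ
  have hupper : ∀ᶠ a in 𝓝[>] 0, u a ≤ u b - K * Real.log b + K * Real.log a := by
    filter_upwards [Ioo_mem_nhdsGT hb.1] with a ha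
    have := hmono ⟨ha.1, ha.2.trans hb.2⟩ hb ha.2.le
    simp only at this
    linarith
  have hlog : Tendsto (fun a => u b - K * Real.log b + K * Real.log a) (𝓝[>] 0) atBot :=
    tendsto_atBot_add_const_left _ _ (Real.tendsto_log_nhdsGT_zero.const_mul_atBot hK)
  exact not_tendsto_nhds_of_tendsto_atBot (tendsto_atBot_mono' _ hupper hlog) l

noncomputable def twBound (k x : ℝ) : ℝ := k * x * (1/2 - x) ^ ((3:ℝ)/2)

section twBound

variable {k x : ℝ}

lemma twBound_zero (k : ℝ) : twBound k 0 = 0 := by simp [twBound]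

lemma twBound_half (k : ℝ) : twBound k (1/2) = 0 := by norm_num [twBound]

lemma continuous_twBound (k : ℝ) : Continuous (twBound k) := by
  unfold twBound
  fun_prop (disch := norm_num)

lemma twBound_nonneg (hk : 0 ≤ k) (hx : x ∈ Icc (0:ℝ) (1/2)) : 0 ≤ twBound k x := by
  have : 0 ≤ 1/2 - x := by linarith [hx.2]
  have := hx.1
  unfold twBound
  positivity

lemma twBound_pos (hk : 0 < k) (hx : x ∈ Ioo (0:ℝ) (1/2)) : 0 < twBound k x := by
  have : 0 < 1/2 - x := by linarith [hx.2]
  have := hx.1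
  unfold twBound
  positivity

lemma twBound_sq (hx : x ≤ 1/2) : twBound k x ^ 2 = k ^ 2 * x ^ 2 * (1/2 - x) ^ 3 := by
  rw [twBound, mul_pow, ← Real.rpow_natCast ((1/2 - x) ^ ((3:ℝ)/2)),
    ← Real.rpow_mul (by linarith), show (3:ℝ)/2 * (2:ℕ) = (3:ℕ) by norm_num, Real.rpow_natCast]
  ring

lemma hasDerivAt_twBound (hx : x ∈ Ioo (0:ℝ) (1/2)) :
    HasDerivAt (twBound k) (twBound k x * (1 / x - 3 / (2 * (1/2 - x)))) x := by
  have hs : 0 < 1/2 - x := by linarith [hx.2]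
  have h := ((hasDerivAt_id x).const_mul k).mul
    (((hasDerivAt_id x).const_sub (1/2)).rpow_const (p := (3:ℝ)/2) (Or.inl hs.ne'))
  refine h.congr_deriv ?_
  simp only [id, twBound]
  rw [Real.rpow_sub_one hs.ne']
  generalize 1/2 - x = s at hs ⊢
  field_simp [hx.1.ne', hs.ne']
  ring

lemma hasDerivAt_sqrt_twBound (hk : 0 < k) (hx : x ∈ Ioo (0:ℝ) (1/2)) :
    HasDerivAt (fun y => √(twBound k y))
      (√(twBound k x) * (1 / (2 * x) - 3 / (4 * (1/2 - x)))) x := by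
  have hB := twBound_pos hk hx
  refine ((Real.hasDerivAt_sqrt hB.ne').comp x (hasDerivAt_twBound hx)).congr_deriv ?_
  have hs : 0 < 1/2 - x := by linarith [hx.2]
  nth_rewrite 2 [← Real.sq_sqrt hB.le]
  generalize 1/2 - x = s at hs ⊢
  field_simp [hx.1.ne', hs.ne']
  ring

lemma hasDerivAt_sqrt_twBound_deriv (hk : 0 < k) (hx : x ∈ Ioo (0:ℝ) (1/2)) :
    HasDerivAt (fun y => √(twBound k y) * (1 / (2 * y) - 3 / (4 * (1/2 - y))))
      (-(1/2 - x) / (2 * √(twBound k x) ^ 3) * (k ^ 2 * (1 + 2 * x - 5 * x ^ 2) / 8)) x := by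
  have hs : 0 < 1/2 - x := by linarith [hx.2]
  have hB := twBound_pos hk hx
  have hW4 : √(twBound k x) ^ 4 = k ^ 2 * x ^ 2 * (1/2 - x) ^ 3 := by
    rw [show √(twBound k x) ^ 4 = (√(twBound k x) ^ 2) ^ 2 by ring, Real.sq_sqrt hB.le,
      twBound_sq hx.2.le]
  have h1 := ((hasDerivAt_id x).const_mul 2).fun_inv (mul_pos two_pos hx.1).ne'
  have h2 := (((hasDerivAt_id x).const_sub (1/2)).const_mul 4).fun_inv (mul_pos four_pos hs).ne'
  have hℓ := (h1.const_mul 1).fun_sub (h2.const_mul 3)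
  simp only [← div_eq_mul_inv, id] at hℓ
  refine ((hasDerivAt_sqrt_twBound hk hx).fun_mul hℓ).congr_deriv ?_
  rw [show 1 + 2 * x - 5 * x ^ 2 = 4 * (1/2 - x) ^ 2 + 12 * x * (1/2 - x) + 3 * x ^ 2 by ring]
  generalize 1/2 - x = s at hs hW4 ⊢
  field_simp [hx.1.ne', hs.ne']
  linear_combination 8 * ((4 * s - 6 * x) ^ 2 - 8 * (4 * s ^ 2 + 6 * x ^ 2)) * hW4

lemma sqrt_twBound_deriv2_lt (hk : 0 < k) (hk2 : 32/3 ≤ k ^ 2) (hx : x ∈ Ioo (0:ℝ) (1/2))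
    {w : ℝ} (hw : √(twBound k x) < w) :
    -(1/2 - x) / (2 * √(twBound k x) ^ 3) * (k ^ 2 * (1 + 2 * x - 5 * x ^ 2) / 8) <
      -(1/2 - x) / (2 * w ^ 3) := by
  have hs : 0 < 1/2 - x := by linarith [hx.2]
  have hW : 0 < √(twBound k x) := Real.sqrt_pos.2 (twBound_pos hk hx)
  have hQ : 3/4 ≤ 1 + 2 * x - 5 * x ^ 2 := by nlinarith [hx.1, hx.2]
  have hr : 1 ≤ k ^ 2 * (1 + 2 * x - 5 * x ^ 2) / 8 := by
    rw [le_div_iff₀ (by norm_num)]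
    nlinarith
  have hFW : -(1/2 - x) / (2 * √(twBound k x) ^ 3) ≤ 0 :=
    div_nonpos_of_nonpos_of_nonneg (by linarith) (by positivity)
  calc -(1/2 - x) / (2 * √(twBound k x) ^ 3) * (k ^ 2 * (1 + 2 * x - 5 * x ^ 2) / 8)
      ≤ -(1/2 - x) / (2 * √(twBound k x) ^ 3) := by nlinarith
    _ < -(1/2 - x) / (2 * w ^ 3) := by
      rw [neg_div, neg_div, neg_lt_neg_iff]
      gcongr

lemma lt_sqrt_twBound_deriv2 (hk : 0 < k) (hk2 : k ^ 2 ≤ 20/3) (hx : x ∈ Ioo (0:ℝ) (1/2))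
    {w : ℝ} (hw0 : 0 < w) (hw : w < √(twBound k x)) :
    -(1/2 - x) / (2 * w ^ 3) <
      -(1/2 - x) / (2 * √(twBound k x) ^ 3) * (k ^ 2 * (1 + 2 * x - 5 * x ^ 2) / 8) := by
  have hs : 0 < 1/2 - x := by linarith [hx.2]
  have hW : 0 < √(twBound k x) := Real.sqrt_pos.2 (twBound_pos hk hx)
  have hQ : 0 ≤ 1 + 2 * x - 5 * x ^ 2 ∧ 1 + 2 * x - 5 * x ^ 2 ≤ 6/5 :=
    ⟨by nlinarith [hx.1, hx.2], by nlinarith [sq_nonneg (x - 1/5)]⟩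
  have hr : k ^ 2 * (1 + 2 * x - 5 * x ^ 2) / 8 ≤ 1 := by
    rw [div_le_iff₀ (by norm_num)]
    nlinarith
  have hFW : -(1/2 - x) / (2 * √(twBound k x) ^ 3) ≤ 0 :=
    div_nonpos_of_nonpos_of_nonneg (by linarith) (by positivity)
  calc -(1/2 - x) / (2 * w ^ 3)
      < -(1/2 - x) / (2 * √(twBound k x) ^ 3) := by
        rw [neg_div, neg_div, neg_lt_neg_iff]
        gcongr
    _ ≤ -(1/2 - x) / (2 * √(twBound k x) ^ 3) * (k ^ 2 * (1 + 2 * x - 5 * x ^ 2) / 8) := by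
        nlinarith

end twBound

namespace IsTWProfile

variable {φ : ℝ → ℝ}

lemma nonneg (hφ : IsTWProfile φ) {x : ℝ} (hx : x ∈ Icc (0:ℝ) (1/2)) : 0 ≤ φ x := by
  obtain ⟨-, -, hpos, h0, hhalf, -, -⟩ := hφ
  rcases hx.1.eq_or_lt with rfl | hx0
  · exact h0.ge
  rcases hx.2.eq_or_lt with rfl | hx1
  · exact hhalf.ge
  exact (hpos x ⟨hx0, hx1⟩).le

lemma hasDerivAt (hφ : IsTWProfile φ) {x : ℝ} (hx : x ∈ Ioo (0:ℝ) (1/2)) :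
    HasDerivAt φ (deriv φ x) x :=
  ((hφ.2.1.differentiableOn three_ne_zero x hx).differentiableAt
    (isOpen_Ioo.mem_nhds hx)).hasDerivAt

lemma hasDerivAt_deriv (hφ : IsTWProfile φ) {x : ℝ} (hx : x ∈ Ioo (0:ℝ) (1/2)) :
    HasDerivAt (deriv φ) (deriv (deriv φ) x) x :=
  (((hφ.2.1.deriv_of_isOpen isOpen_Ioo (by norm_num : (1:WithTop ℕ∞) + 1 ≤ 3)).differentiableOn
    one_ne_zero x hx).differentiableAt (isOpen_Ioo.mem_nhds hx)).hasDerivAt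

lemma hasDerivAt_deriv_deriv (hφ : IsTWProfile φ) {x : ℝ} (hx : x ∈ Ioo (0:ℝ) (1/2)) :
    HasDerivAt (deriv (deriv φ)) (deriv (deriv (deriv φ)) x) x :=
  ((((hφ.2.1.deriv_of_isOpen isOpen_Ioo (by norm_num : (2:WithTop ℕ∞) + 1 ≤ 3)).deriv_of_isOpen
    isOpen_Ioo (by norm_num : (1:WithTop ℕ∞) + 1 ≤ 2)).differentiableOn one_ne_zero x
    hx).differentiableAt (isOpen_Ioo.mem_nhds hx)).hasDerivAt

lemma tendsto_deriv_nhdsGT_zero (hφ : IsTWProfile φ) : Tendsto (deriv φ) (𝓝[>] 0) (𝓝 1) := by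
  obtain ⟨hC1, -, -, -, -, hd0, -⟩ := hφ
  have hcont : ContinuousWithinAt (derivWithin φ (Icc 0 (1/2))) (Icc 0 (1/2)) 0 :=
    hC1.continuousOn_derivWithin (uniqueDiffOn_Icc (by norm_num)) le_rfl 0 (by norm_num)
  rw [ContinuousWithinAt, hd0] at hcont
  rw [← nhdsWithin_Ioo_eq_nhdsGT (by norm_num : (0:ℝ) < 1/2)]
  refine (hcont.mono_left (nhdsWithin_mono _ Ioo_subset_Icc_self)).congr' ?_
  filter_upwards [self_mem_nhdsWithin] with x hx
  exact derivWithin_of_mem_nhds (Icc_mem_nhds hx.1 hx.2)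

lemma eventually_lt_two_mul (hφ : IsTWProfile φ) : ∀ᶠ x in 𝓝[>] 0, φ x < 2 * x := by
  obtain ⟨hC1, -, -, h0, -, hd0, -⟩ := hφ
  have hderiv := (hC1.differentiableOn one_ne_zero 0 (by norm_num)).hasDerivWithinAt
  rw [hd0, hasDerivWithinAt_iff_tendsto_slope] at hderiv
  have hle : 𝓝[>] (0:ℝ) ≤ 𝓝[Icc 0 (1/2) \ {0}] 0 := by
    rw [← nhdsWithin_Ioo_eq_nhdsGT (by norm_num : (0:ℝ) < 1/2)]
    exact nhdsWithin_mono _ fun y hy => ⟨Ioo_subset_Icc_self hy, hy.1.ne'⟩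
  filter_upwards [(hderiv.mono_left hle).eventually (gt_mem_nhds (by norm_num : (1:ℝ) < 2)),
    self_mem_nhdsWithin] with x hx hx0
  rwa [slope_def_field, h0, sub_zero, sub_zero, div_lt_iff₀ hx0] at hx

lemma hasDerivAt_firstIntegral (hφ : IsTWProfile φ) {x : ℝ} (hx : x ∈ Ioo (0:ℝ) (1/2)) :
    HasDerivAt (fun y => φ y * deriv (deriv φ) y - deriv φ y ^ 2 / 2 - y) 0 x := by
  have h := (((hφ.hasDerivAt hx).fun_mul (hφ.hasDerivAt_deriv_deriv hx)).fun_sub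
    (((hφ.hasDerivAt_deriv hx).fun_pow 2).div_const 2)).fun_sub (hasDerivAt_id x)
  refine h.congr_deriv ?_
  rw [hφ.2.2.2.2.2.2 x hx]
  push_cast
  ring

lemma exists_firstIntegral_eq (hφ : IsTWProfile φ) : ∃ C, ∀ x ∈ Ioo (0:ℝ) (1/2),
    φ x * deriv (deriv φ) x - deriv φ x ^ 2 / 2 - x = C :=
  isOpen_Ioo.exists_is_const_of_deriv_eq_zero isPreconnected_Ioo
    (fun _ hx => (hφ.hasDerivAt_firstIntegral hx).differentiableAt.differentiableWithinAt)
    fun _ hx => (hφ.hasDerivAt_firstIntegral hx).deriv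

lemma mul_deriv_deriv_eq (hφ : IsTWProfile φ) {x : ℝ} (hx : x ∈ Ioo (0:ℝ) (1/2)) :
    φ x * deriv (deriv φ) x = deriv φ x ^ 2 / 2 + x - 1/2 := by
  obtain ⟨C, hC⟩ := hφ.exists_firstIntegral_eq
  suffices hL : C + 1/2 = 0 by linarith [hC x hx]
  by_contra hL
  set L := C + 1/2
  -- `(L φ')' = L (η + C + φ'²/2) / φ` with numerator `→ L² > 0` and `φ < 2η`, so near `0`
  -- it is at least `L² / (4η)`, which is incompatible with `L φ' → L`.
  have hnum : Tendsto (fun y => L * (y + C + deriv φ y ^ 2 / 2)) (𝓝[>] 0) (𝓝 (L ^ 2)) := by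
    have := ((tendsto_id.mono_left nhdsWithin_le_nhds).add_const C |>.add
      ((hφ.tendsto_deriv_nhdsGT_zero.pow 2).div_const 2)).const_mul L
    convert this using 2
    simp only [id, L]
    ring
  refine not_tendsto_nhds_of_div_le_deriv (u := fun y => L * deriv φ y)
    (u' := fun y => L * deriv (deriv φ) y) (div_pos (sq_pos_of_ne_zero hL) four_pos) ?_ (L * 1)
    (hφ.tendsto_deriv_nhdsGT_zero.const_mul L)
  filter_upwards [hnum.eventually (lt_mem_nhds (half_lt_self (sq_pos_of_ne_zero hL))),
    hφ.eventually_lt_two_mul, Ioo_mem_nhdsGT (by norm_num : (0:ℝ) < 1/2)] with y hnum hlt hy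
  refine ⟨(hφ.hasDerivAt_deriv hy).const_mul L, ?_⟩
  have hφy := hφ.2.2.1 y hy
  have hφ'' : deriv (deriv φ) y = (y + C + deriv φ y ^ 2 / 2) / φ y := by
    rw [eq_div_iff hφy.ne']
    linarith [hC y hy]
  rw [hφ'', ← mul_div_assoc, div_le_div_iff₀ hy.1 hφy]
  nlinarith [sq_nonneg L]

lemma hasDerivAt_sqrt (hφ : IsTWProfile φ) {x : ℝ} (hx : x ∈ Ioo (0:ℝ) (1/2)) :
    HasDerivAt (fun y => √(φ y)) (deriv φ x / (2 * √(φ x))) x :=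
  ((Real.hasDerivAt_sqrt (hφ.2.2.1 x hx).ne').comp x (hφ.hasDerivAt hx)).congr_deriv (by ring)

lemma hasDerivAt_deriv_div_sqrt (hφ : IsTWProfile φ) {x : ℝ} (hx : x ∈ Ioo (0:ℝ) (1/2)) :
    HasDerivAt (fun y => deriv φ y / (2 * √(φ y))) (-(1/2 - x) / (2 * √(φ x) ^ 3)) x := by
  have hφx := hφ.2.2.1 x hx
  have hr : 0 < √(φ x) := Real.sqrt_pos.2 hφx
  refine ((hφ.hasDerivAt_deriv hx).fun_div ((hφ.hasDerivAt_sqrt hx).const_mul 2)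
    (by positivity)).congr_deriv ?_
  have hfi := hφ.mul_deriv_deriv_eq hx
  rw [← Real.sq_sqrt hφx.le] at hfi
  field_simp
  linear_combination 2 * hfi

theorem le_twBound (hφ : IsTWProfile φ) {k : ℝ} (hk : 0 < k) (hk2 : 32/3 ≤ k ^ 2) :
    ∀ η ∈ Icc (0:ℝ) (1/2), φ η ≤ twBound k η := by
  have ⟨hC1, _, _, h0, hhalf, _, _⟩ := hφ
  have hcmp := nonpos_of_hasDerivAt2_pos_of_pos (g := fun y => √(φ y) - √(twBound k y))
    (hC1.continuousOn.sqrt.sub (continuous_twBound k).continuousOn.sqrt)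
    (by simp only [h0, twBound_zero, sub_self, le_refl])
    (by simp only [hhalf, twBound_half, sub_self, le_refl])
    (fun x hx => (hφ.hasDerivAt_sqrt hx).fun_sub (hasDerivAt_sqrt_twBound hk hx))
    (fun x hx => (hφ.hasDerivAt_deriv_div_sqrt hx).fun_sub (hasDerivAt_sqrt_twBound_deriv hk hx))
    fun x hx hwW => sub_pos.2 (sqrt_twBound_deriv2_lt hk hk2 hx (sub_pos.1 hwW))
  intro η hη
  exact (Real.sqrt_le_sqrt_iff (twBound_nonneg hk.le hη)).1 (sub_nonpos.1 (hcmp η hη))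

theorem twBound_le (hφ : IsTWProfile φ) {k : ℝ} (hk : 0 < k) (hk2 : k ^ 2 ≤ 20/3) :
    ∀ η ∈ Icc (0:ℝ) (1/2), twBound k η ≤ φ η := by
  have ⟨hC1, _, hpos, h0, hhalf, _, _⟩ := hφ
  have hcmp := nonpos_of_hasDerivAt2_pos_of_pos (g := fun y => √(twBound k y) - √(φ y))
    ((continuous_twBound k).continuousOn.sqrt.sub hC1.continuousOn.sqrt)
    (by simp only [h0, twBound_zero, sub_self, le_refl])
    (by simp only [hhalf, twBound_half, sub_self, le_refl])
    (fun x hx => (hasDerivAt_sqrt_twBound hk hx).fun_sub (hφ.hasDerivAt_sqrt hx))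
    (fun x hx => (hasDerivAt_sqrt_twBound_deriv hk hx).fun_sub (hφ.hasDerivAt_deriv_div_sqrt hx))
    fun x hx hWw => sub_pos.2 (lt_sqrt_twBound_deriv2 hk hk2 hx
      (Real.sqrt_pos.2 (hpos x hx)) (sub_pos.1 hWw))
  intro η hη
  exact (Real.sqrt_le_sqrt_iff (hφ.nonneg hη)).1 (sub_nonpos.1 (hcmp η hη))

end IsTWProfile

/-- Theorem 2: explicit lower and upper bounds (2.5) for the traveling-wave profile:
`(4√2/3)·η·(1/2 − η)^{3/2} ≤ φ(η) ≤ (4√6/3)·η·(1/2 − η)^{3/2}` on `[0,1/2]`. -/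
theorem traveling_wave_bounds (φ : ℝ → ℝ) (hφ : IsTWProfile φ) :
    ∀ η ∈ Set.Icc (0:ℝ) (1/2),
      (4 * Real.sqrt 2 / 3) * η * (1/2 - η) ^ ((3:ℝ)/2) ≤ φ η ∧
      φ η ≤ (4 * Real.sqrt 6 / 3) * η * (1/2 - η) ^ ((3:ℝ)/2) := by
  have hk₁ : (4 * Real.sqrt 2 / 3) ^ 2 = 32/9 := by
    rw [div_pow, mul_pow, Real.sq_sqrt zero_le_two]
    norm_num
  have hk₂ : (4 * Real.sqrt 6 / 3) ^ 2 = 32/3 := by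
    rw [div_pow, mul_pow, Real.sq_sqrt (by norm_num)]
    norm_num
  intro η hη
  exact ⟨hφ.twBound_le (by positivity) (by rw [hk₁]; norm_num) η hη,
    hφ.le_twBound (by positivity) hk₂.ge η hη⟩
end

section
/- Let d > 0 and A₀ > 0, and define φ₀(η) = A₀·η·(d − η)^{3/2} for η ∈ [0,d]. If A₀²·d² ≥ 8/3, then φ₀(η)·φ₀''(η) ≤ (1/2)·(φ₀'(η))² + η − d for all η ∈ (0,d). -/
/-!
Write `s = √(d - η)`. Then `φ₀ = A₀ η s³`, `φ₀' = A₀ s (s² - 3η/2)` and `φ₀'' = -3A₀ s + 3A₀η/(4s)`,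
and the defect `(1/2)(φ₀')² + η - d - φ₀ φ₀''` factors as
`s² (A₀² (s⁴/2 + 3ηs²/2 + 3η²/8) - 1)`. The quartic in the bracket is at least `(3/8)(η + s²)² = (3/8)d²`,
so the bracket is nonnegative as soon as `A₀²d² ≥ 8/3`.
-/

open Real

lemma hasDerivAt_const_sub_rpow {d p x : ℝ} (h : x < d ∨ 1 ≤ p) :
    HasDerivAt (fun x => (d - x) ^ p) (-(p * (d - x) ^ (p - 1))) x := by
  simpa using ((hasDerivAt_id x).const_sub d).rpow_const (h.imp_left fun h => (sub_pos.2 h).ne')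

section

variable (A d : ℝ)

lemma hasDerivAt_mul_mul_rpow_three_halves (x : ℝ) :
    HasDerivAt (fun x => A * x * (d - x) ^ (3 / 2 : ℝ))
      (A * (d - x) ^ (3 / 2 : ℝ) - 3 / 2 * A * x * (d - x) ^ (1 / 2 : ℝ)) x := by
  refine (((hasDerivAt_id' x).const_mul A).mul
    (hasDerivAt_const_sub_rpow (d := d) (p := 3 / 2) (.inr (by norm_num)))).congr_deriv ?_
  norm_num
  ring

lemma deriv_mul_mul_rpow_three_halves :
    deriv (fun x => A * x * (d - x) ^ (3 / 2 : ℝ)) =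
      fun x => A * (d - x) ^ (3 / 2 : ℝ) - 3 / 2 * A * x * (d - x) ^ (1 / 2 : ℝ) :=
  funext fun x => (hasDerivAt_mul_mul_rpow_three_halves A d x).deriv

lemma hasDerivAt_deriv_mul_mul_rpow_three_halves {x : ℝ} (hx : x < d) :
    HasDerivAt (fun x => A * (d - x) ^ (3 / 2 : ℝ) - 3 / 2 * A * x * (d - x) ^ (1 / 2 : ℝ))
      (-3 * A * (d - x) ^ (1 / 2 : ℝ) + 3 / 4 * A * x * (d - x) ^ (-(1 / 2) : ℝ)) x := by
  refine (((hasDerivAt_const_sub_rpow (d := d) (p := 3 / 2) (.inr (by norm_num))).const_mul A).sub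
    (((hasDerivAt_id' x).const_mul (3 / 2 * A)).mul
      (hasDerivAt_const_sub_rpow (d := d) (p := 1 / 2) (.inl hx)))).congr_deriv ?_
  norm_num
  ring

end

lemma rpow_one_half_pow {t : ℝ} (ht : 0 ≤ t) (n : ℕ) :
    (t ^ (1 / 2 : ℝ)) ^ n = t ^ (n / 2 : ℝ) := by
  rw [← rpow_natCast, ← rpow_mul ht]
  ring_nf

lemma subsolution_ineq_of_sub_eq_sq {A η s d : ℝ} (hη : 0 ≤ η) (hs : d - η = s ^ 2)
    (hA : 8 / 3 ≤ A ^ 2 * d ^ 2) :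
    A * η * s ^ 3 * (-3 * A * s + 3 / 4 * A * η * s⁻¹) ≤
      1 / 2 * (A * s ^ 3 - 3 / 2 * A * η * s) ^ 2 + η - d := by
  obtain rfl : d = η + s ^ 2 := by linarith
  have hquartic : 1 ≤ A ^ 2 * (1 / 2 * s ^ 4 + 3 / 2 * η * s ^ 2 + 3 / 8 * η ^ 2) := by
    nlinarith [mul_nonneg (mul_nonneg (sq_nonneg A) hη) (sq_nonneg s),
      mul_nonneg (sq_nonneg A) (sq_nonneg (s ^ 2))]
  have hdefect : 1 / 2 * (A * s ^ 3 - 3 / 2 * A * η * s) ^ 2 + η - (η + s ^ 2) -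
      A * η * s ^ 3 * (-3 * A * s + 3 / 4 * A * η * s⁻¹) =
      s ^ 2 * (A ^ 2 * (1 / 2 * s ^ 4 + 3 / 2 * η * s ^ 2 + 3 / 8 * η ^ 2) - 1) := by
    field_simp
    ring
  nlinarith [mul_nonneg (sq_nonneg s) (sub_nonneg.2 hquartic)]

theorem subsolution_of_first_integral_general (d A₀ : ℝ)
    (hcond : A₀^2 * d^2 ≥ 8/3)
    (φ₀ : ℝ → ℝ) (hφ₀ : ∀ η, φ₀ η = A₀ * η * (d - η) ^ ((3:ℝ)/2)) :
    ∀ η ∈ Set.Ioo (0:ℝ) d,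
      φ₀ η * deriv (deriv φ₀) η ≤ (1/2) * (deriv φ₀ η)^2 + η - d := by
  rintro η ⟨hη, hηd⟩
  obtain rfl : φ₀ = fun η => A₀ * η * (d - η) ^ ((3:ℝ)/2) := funext hφ₀
  have hdη : 0 ≤ d - η := by linarith
  rw [deriv_mul_mul_rpow_three_halves,
    (hasDerivAt_deriv_mul_mul_rpow_three_halves A₀ d hηd).deriv]
  have hcube : (d - η) ^ (3 / 2 : ℝ) = ((d - η) ^ (1 / 2 : ℝ)) ^ 3 := by
    rw [rpow_one_half_pow hdη]
    norm_num
  have hsq : d - η = ((d - η) ^ (1 / 2 : ℝ)) ^ 2 := by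
    rw [rpow_one_half_pow hdη]
    norm_num
  beta_reduce
  rw [hcube, rpow_neg hdη]
  exact subsolution_ineq_of_sub_eq_sq hη.le hsq hcond

/-- Inequality (2.3) of Lemma 2.1: `φ₀(η) = A₀·η·(d − η)^{3/2}` is a subsolution
of `φφ'' = (1/2)(φ')² + η − d` when `A₀²d² ≥ 8/3`. -/
theorem subsolution_of_first_integral (d A₀ : ℝ) (hd : 0 < d) (hA : 0 < A₀)
    (hcond : A₀^2 * d^2 ≥ 8/3)
    (φ₀ : ℝ → ℝ) (hφ₀ : ∀ η, φ₀ η = A₀ * η * (d - η) ^ ((3:ℝ)/2)) :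
    ∀ η ∈ Set.Ioo (0:ℝ) d,
      φ₀ η * deriv (deriv φ₀) η ≤ (1/2) * (deriv φ₀ η)^2 + η - d :=
  subsolution_of_first_integral_general d A₀ hcond φ₀ hφ₀
end
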